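/- arXiv:1702.06507 — 4 statements merged into one kernel-verified Lean document; each statement's English description precedes it below -/
import Mathlib

section
/- Let N be a squarefree positive integer and d a positive divisor of N. Then ∑_{c ∣ N} μ(gcd(c,d)) · c = μ(d) · σ₁(N/d) · φ(d), where σ₁ is the sum-of-divisors function and φ is Euler's totient function. -/
/-!
Write `N = d * m`; squarefreeness makes `d` and `m` coprime, and `c ↦ μ(gcd(c, d)) * c` is
multiplicative, so the sum splits into a sum over the divisors of `d`, where `gcd(a, d) = a` and
`∑ μ(a) a = ∏_{p ∣ d} (1 - p) = μ(d) φ(d)`, times a sum over the divisors of `m`, where the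
gcd is `1`.
-/

open ArithmeticFunction
open scoped ArithmeticFunction.Moebius Nat

theorem Nat.Coprime.sum_divisors_mul_of_map_mul {R : Type*} [CommSemiring R] {f : ℕ → R}
    (hf : ∀ a b, a.Coprime b → f (a * b) = f a * f b) {m n : ℕ} (hmn : m.Coprime n) :
    ∑ c ∈ (m * n).divisors, f c = (∑ a ∈ m.divisors, f a) * ∑ b ∈ n.divisors, f b := by
  rw [hmn.divisors_mul, Finset.sum_map, Finset.sum_mul_sum, ← Finset.sum_product']
  refine (Finset.sum_attach _ fun p : ℕ × ℕ => f (p.1 * p.2)).trans (Finset.sum_congr rfl ?_)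
  rintro ⟨a, b⟩ hab
  rw [Finset.mem_product] at hab
  exact hf a b <| (hmn.coprime_dvd_left (Nat.dvd_of_mem_divisors hab.1)).coprime_dvd_right
    (Nat.dvd_of_mem_divisors hab.2)

theorem Nat.Coprime.gcd_mul_left_eq {a b : ℕ} (hab : a.Coprime b) (d : ℕ) :
    (a * b).gcd d = a.gcd d * b.gcd d := by
  rw [Nat.gcd_comm, hab.gcd_mul d, Nat.gcd_comm d, Nat.gcd_comm d]

theorem moebius_gcd_mul_of_coprime {a b : ℕ} (hab : a.Coprime b) (d : ℕ) :
    μ ((a * b).gcd d) = μ (a.gcd d) * μ (b.gcd d) :=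
  hab.gcd_mul_left_eq d ▸ isMultiplicative_moebius.map_mul_of_coprime
    ((hab.coprime_dvd_left (Nat.gcd_dvd_left a d)).coprime_dvd_right (Nat.gcd_dvd_left b d))

theorem moebius_mul_totient_of_squarefree {n : ℕ} (hn : Squarefree n) :
    μ n * (φ n : ℤ) = ∏ p ∈ n.primeFactors, (1 - (p : ℤ)) := by
  have hμ : μ n = (-1) ^ n.primeFactors.card := by
    rw [moebius_apply_of_squarefree hn,
      ← (cardDistinctFactors_eq_cardFactors_iff_squarefree hn.ne_zero).2 hn,
      cardDistinctFactors_apply, ← List.card_toFinset, Nat.toFinset_factors]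
  have hφ : φ n = ∏ p ∈ n.primeFactors, (p - 1) := by
    rw [Nat.totient_eq_div_primeFactors_mul, Nat.prod_primeFactors_of_squarefree hn,
      Nat.div_self (Nat.pos_of_ne_zero hn.ne_zero), one_mul]
  rw [hμ, hφ, Nat.cast_prod, ← Finset.prod_neg]
  refine Finset.prod_congr rfl fun p hp => ?_
  rw [Nat.cast_sub (Nat.prime_of_mem_primeFactors hp).one_le]
  push_cast
  ring

theorem sum_divisors_moebius_mul_self_of_squarefree {n : ℕ} (hn : Squarefree n) :
    ∑ a ∈ n.divisors, μ a * (a : ℤ) = μ n * (φ n : ℤ) := by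
  rw [moebius_mul_totient_of_squarefree hn]
  simpa using
    ((isMultiplicative_id.natCast (R := ℤ)).prodPrimeFactors_one_sub_of_squarefree _ hn).symm

theorem stmt_3_general (N : ℕ) (hsf : Squarefree N) (d : ℕ) (hd : d ∣ N) :
    ∑ c ∈ N.divisors, μ (Nat.gcd c d) * (c : ℤ) =
      μ d * (∑ e ∈ (N / d).divisors, (e : ℤ)) * (Nat.totient d : ℤ) := by
  obtain ⟨m, rfl⟩ := hd
  have hdm : d.Coprime m := Nat.coprime_of_squarefree_mul hsf
  rw [Nat.mul_div_cancel_left m (Nat.pos_of_ne_zero (left_ne_zero_of_mul hsf.ne_zero)),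
    hdm.sum_divisors_mul_of_map_mul fun a b hab => by
      rw [moebius_gcd_mul_of_coprime hab]; push_cast; ring]
  have on_d : ∑ a ∈ d.divisors, μ (a.gcd d) * (a : ℤ) = μ d * φ d := by
    rw [← sum_divisors_moebius_mul_self_of_squarefree hsf.of_mul_left]
    exact Finset.sum_congr rfl fun a ha => by rw [Nat.gcd_eq_left (Nat.dvd_of_mem_divisors ha)]
  have on_m : ∑ b ∈ m.divisors, μ (b.gcd d) * (b : ℤ) = ∑ b ∈ m.divisors, (b : ℤ) :=
    Finset.sum_congr rfl fun b hb => by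
      rw [((hdm.coprime_dvd_right (Nat.dvd_of_mem_divisors hb)).symm).gcd_eq_one,
        moebius_apply_one, one_mul]
  rw [on_d, on_m]
  ring

/-- For squarefree `N` and `d ∣ N`:
`∑_{c ∣ N} μ(gcd(c,d))·c = μ(d)·σ₁(N/d)·φ(d)`. -/
theorem stmt_3 (N : ℕ) (hN : 0 < N) (hsf : Squarefree N) (d : ℕ) (hd : d ∣ N) :
    ∑ c ∈ N.divisors, μ (Nat.gcd c d) * (c : ℤ) =
      μ d * (∑ e ∈ (N / d).divisors, (e : ℤ)) * (Nat.totient d : ℤ) :=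
  stmt_3_general N hsf d hd
end

section
/- Let N be a positive integer, L = {(b, c/N; -a, -b) : a,b,c ∈ ℤ} ⊂ Mat₂(ℚ) with quadratic form Q(X) = -N det(X). Then L is an even lattice, and its dual lattice is L' = {(b/2N, c/N; -a, -b/2N) : a,b,c ∈ ℤ}, so that L'/L ≅ ℤ/2Nℤ with induced quadratic form x ↦ x²/4N mod ℤ. -/
/-!
With `X = (B/2N, C/N; -A, -B/2N)` and `Y = (b, c/N; -a, -b)` one computes
`N tr(XY) = Bb - Ca - Ac` and `-N det Y = N b² - ac`, which gives evenness of `L` and `L' ⊆ L^∨`.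
Conversely, pairing a trace-zero `X = (p, q; r, -p)` with the lattice vectors `(1, 0; 0, -1)`,
`(0, 1/N; 0, 0)` and `(0, 0; 1, 0)` yields `2Np, r, Nq ∈ ℤ`, i.e. `X ∈ L'`. Subtracting the diagonal
part `repL' N B` from an element of `L'` lands in `L`, and `repL' N b - repL' N b' ∈ L` exactly
when `(b - b')/2N ∈ ℤ`.
-/

open Matrix

/-- Membership in the lattice `L = {(b, c/N; -a, -b) : a,b,c ∈ ℤ}`. -/
def memL (N : ℕ) (X : Matrix (Fin 2) (Fin 2) ℚ) : Prop :=
  ∃ a b c : ℤ, X = !![(b : ℚ), (c : ℚ) / N; -(a : ℚ), -(b : ℚ)]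

/-- Membership in `L' = {(b/2N, c/N; -a, -b/2N) : a,b,c ∈ ℤ}`. -/
def memL' (N : ℕ) (X : Matrix (Fin 2) (Fin 2) ℚ) : Prop :=
  ∃ a b c : ℤ, X = !![(b : ℚ) / (2 * N), (c : ℚ) / N; -(a : ℚ), -(b : ℚ) / (2 * N)]

/-- The representative of the class `b ∈ ℤ/2Nℤ` in `L'`. -/
def repL' (N : ℕ) (b : ℤ) : Matrix (Fin 2) (Fin 2) ℚ :=
  !![(b : ℚ) / (2 * N), 0; 0, -(b : ℚ) / (2 * N)]

section Lattice

variable {N : ℕ}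

theorem memL.exists_neg_mul_det_eq_int (hN : (N : ℚ) ≠ 0) {X : Matrix (Fin 2) (Fin 2) ℚ}
    (hX : memL N X) : ∃ k : ℤ, -(N : ℚ) * X.det = k := by
  obtain ⟨a, b, c, rfl⟩ := hX
  refine ⟨N * b ^ 2 - a * c, ?_⟩
  simp only [det_fin_two_of]
  push_cast
  field_simp
  ring

theorem memL'.exists_mul_trace_mul_eq_int (hN : (N : ℚ) ≠ 0) {X Y : Matrix (Fin 2) (Fin 2) ℚ}
    (hX : memL' N X) (hY : memL N Y) : ∃ k : ℤ, (N : ℚ) * (X * Y).trace = k := by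
  obtain ⟨A, B, C, rfl⟩ := hX
  obtain ⟨a, b, c, rfl⟩ := hY
  refine ⟨B * b - C * a - A * c, ?_⟩
  simp only [mul_fin_two, trace_fin_two_of]
  push_cast
  field_simp
  ring

theorem memL_diag : memL N !![1, 0; 0, -1] := ⟨0, 1, 0, by simp⟩

theorem memL_upper : memL N !![0, 1 / (N : ℚ); 0, 0] := ⟨0, 0, 1, by simp⟩

theorem memL_lower : memL N !![0, 0; 1, 0] := ⟨-1, 0, 0, by simp⟩

theorem memL'_of_forall_memL (hN : (N : ℚ) ≠ 0) {X : Matrix (Fin 2) (Fin 2) ℚ}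
    (hX : X.trace = 0) (h : ∀ Y, memL N Y → ∃ k : ℤ, (N : ℚ) * (X * Y).trace = k) :
    memL' N X := by
  obtain ⟨p, q, r, s, rfl⟩ : ∃ p q r s, X = !![p, q; r, s] := ⟨_, _, _, _, eta_fin_two X⟩
  obtain ⟨k₁, hk₁⟩ := h _ memL_diag
  obtain ⟨k₂, hk₂⟩ := h _ memL_upper
  obtain ⟨k₃, hk₃⟩ := h _ memL_lower
  simp only [trace_fin_two_of, mul_fin_two] at hX hk₁ hk₂ hk₃
  have hs : s = -p := by linarith
  subst hs
  have hp : p = k₁ / (2 * N) := by field_simp; linear_combination hk₁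
  have hr : r = k₂ := by field_simp at hk₂; linear_combination hk₂
  have hq : q = k₃ / N := by field_simp; linear_combination hk₃
  refine ⟨-k₂, k₁, k₃, ?_⟩
  rw [hp, hq, hr]
  push_cast
  ring_nf

theorem memL'.exists_memL_sub_repL' {X : Matrix (Fin 2) (Fin 2) ℚ} (hX : memL' N X) :
    ∃ b : ℤ, memL N (X - repL' N b) := by
  obtain ⟨a, b, c, rfl⟩ := hX
  exact ⟨b, a, 0, c, by ext i j; fin_cases i <;> fin_cases j <;> simp [repL']⟩

theorem memL_repL'_sub_iff (hN : (N : ℚ) ≠ 0) (b b' : ℤ) :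
    memL N (repL' N b - repL' N b') ↔ (2 * N : ℤ) ∣ b - b' := by
  constructor
  · rintro ⟨a, t, c, hE⟩
    have h₀₀ := congrFun (congrFun hE 0) 0
    simp only [repL', Matrix.sub_apply, of_apply, cons_val', cons_val_zero, empty_val',
      cons_val_fin_one] at h₀₀
    refine ⟨t, ?_⟩
    have : (b - b' : ℚ) = 2 * N * t := by field_simp at h₀₀; linear_combination h₀₀
    exact_mod_cast this
  · rintro ⟨t, ht⟩
    have hb : (b : ℚ) = b' + 2 * N * t := by
      rw [← sub_eq_iff_eq_add']; exact_mod_cast ht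
    refine ⟨0, t, 0, ?_⟩
    ext i j
    fin_cases i <;> fin_cases j <;> simp [repL', hb] <;> field_simp <;> ring

theorem neg_mul_det_repL' (hN : (N : ℚ) ≠ 0) (b : ℤ) :
    -(N : ℚ) * (repL' N b).det = (b : ℚ) ^ 2 / (4 * N) := by
  simp only [repL', det_fin_two_of]
  field_simp
  ring

end Lattice

/-- `L` is even for `Q(X) = -N det X`; its dual lattice (inside the trace-zero
matrices, w.r.t. `(X,Y) = N·tr(XY)`) is `L'`; every class of `L'/L` is
represented by some `repL' N b` with `b ∈ ℤ`, two representatives agree iff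
`b ≡ b' (mod 2N)`, and the quadratic form on the class of `b` is `b²/4N`,
well defined modulo `ℤ`. Hence `L'/L ≅ ℤ/2Nℤ` with `x ↦ x²/4N mod ℤ`. -/
theorem stmt_10 (N : ℕ) (hN : 0 < N) :
    (∀ X, memL N X → ∃ k : ℤ, -(N : ℚ) * X.det = k) ∧
    (∀ X : Matrix (Fin 2) (Fin 2) ℚ, X.trace = 0 →
      (memL' N X ↔ ∀ Y, memL N Y → ∃ k : ℤ, (N : ℚ) * (X * Y).trace = k)) ∧
    (∀ X, memL' N X → ∃ b : ℤ, memL N (X - repL' N b)) ∧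
    (∀ b b' : ℤ, memL N (repL' N b - repL' N b') ↔ (2 * N : ℤ) ∣ b - b') ∧
    (∀ b : ℤ, -(N : ℚ) * (repL' N b).det = (b : ℚ) ^ 2 / (4 * N)) := by
  have hN : (N : ℚ) ≠ 0 := by exact_mod_cast hN.ne'
  exact ⟨fun _ hX => hX.exists_neg_mul_det_eq_int hN,
    fun _ hX => ⟨fun h _ hY => h.exists_mul_trace_mul_eq_int hN hY, memL'_of_forall_memL hN hX⟩,
    fun _ hX => hX.exists_memL_sub_repL', memL_repL'_sub_iff hN, neg_mul_det_repL' hN⟩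
end

section
/- Let N be a positive integer, β ∈ ℤ/2Nℤ, m ∈ ℚ with m ≡ β²/4N mod ℤ. The map sending X = (b/2N, c/N; -a, -b/2N) ∈ L' to the binary quadratic form Q_X(x,y) = aN x² + b xy + c y² is a bijection between L_{β,m} = {X ∈ L + β : Q(X) = m} and the set of integral binary quadratic forms of discriminant 4Nm with leading coefficient divisible by N and middle coefficient congruent to β mod 2N. Moreover this bijection satisfies Q_{g⁻¹.X} = Q_X ∘ g for g ∈ Γ₀(N), where (Q.g)(x,y) = Q(g(x,y)ᵗ). -/
open Matrix

/-- The element of `L'` with parameters `a, b, c`, i.e. `(b/2N, c/N; -a, -b/2N)`. -/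
def fm (N : ℕ) (a b c : ℤ) : Matrix (Fin 2) (Fin 2) ℚ :=
  !![(b : ℚ) / (2 * N), (c : ℚ) / N; -(a : ℚ), -(b : ℚ) / (2 * N)]

lemma det_fm (N : ℕ) (hN : (N:ℚ) ≠ 0) (a b c : ℤ) :
    -(N : ℚ) * (fm N a b c).det = ((b^2 - 4*(a*N)*c : ℤ) : ℚ) / (4*N) := by
  rw [Matrix.det_fin_two]
  simp only [fm, Matrix.of_apply, Matrix.cons_val', Matrix.cons_val_zero, Matrix.cons_val_one, Matrix.head_cons,
    Matrix.empty_val', Matrix.cons_val_fin_one, Matrix.head_fin_const]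
  push_cast
  field_simp
  ring

/-- The coefficient-extraction map `X ↦ (aN, b, c)`. -/
def qmap (N : ℕ) (X : Matrix (Fin 2) (Fin 2) ℚ) : ℤ × ℤ × ℤ :=
  ((-(X 1 0).num) * N, ((2 * (N:ℚ)) * X 0 0).num, ((N:ℚ) * X 0 1).num)

lemma qmap_fm (N : ℕ) (hN : (N:ℚ) ≠ 0) (a b c : ℤ) :
    qmap N (fm N a b c) = (a * N, b, c) := by
  have h2N : (2:ℚ) * (N:ℚ) ≠ 0 := mul_ne_zero two_ne_zero hN
  simp [qmap, fm]
  rw [mul_div_cancel₀ _ h2N, mul_div_cancel₀ _ hN]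
  simp

/-- The map `X = (b/2N, c/N; -a, -b/2N) ↦ Q_X = (aN)x² + bxy + cy²` is a bijection
between `L_{β,m}` and the integral binary quadratic forms (recorded as coefficient
triples) of discriminant `4Nm` with `N` dividing the leading coefficient and middle
coefficient `≡ β (mod 2N)`; moreover it intertwines the `Γ₀(N)`-actions:
`Q_{g⁻¹.X} = Q_X ∘ g`. -/
theorem stmt_11 (N : ℕ) (hN : 0 < N) (β : ℤ) (m : ℚ)
    (hm : ∃ k : ℤ, m - (β : ℚ) ^ 2 / (4 * N) = k) :
    (∃ F : {X : Matrix (Fin 2) (Fin 2) ℚ //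
              (∃ a b c : ℤ, X = fm N a b c ∧ (b : ZMod (2 * N)) = (β : ZMod (2 * N))) ∧
              -(N : ℚ) * X.det = m} ≃
           {q : ℤ × ℤ × ℤ // (N : ℤ) ∣ q.1 ∧
              (q.2.1 : ZMod (2 * N)) = (β : ZMod (2 * N)) ∧
              ((q.2.1 ^ 2 - 4 * q.1 * q.2.2 : ℤ) : ℚ) = 4 * N * m},
        ∀ X (a b c : ℤ), X.val = fm N a b c → (F X).val = (a * N, b, c)) ∧
    (∀ g : Matrix.SpecialLinearGroup (Fin 2) ℤ, (N : ℤ) ∣ (g : Matrix (Fin 2) (Fin 2) ℤ) 1 0 →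
      ∀ a b c a' b' c' : ℤ,
        fm N a' b' c' =
          ((g : Matrix (Fin 2) (Fin 2) ℤ).map (Int.cast : ℤ → ℚ))⁻¹ * fm N a b c *
            (g : Matrix (Fin 2) (Fin 2) ℤ).map (Int.cast : ℤ → ℚ) →
        ∀ x y : ℚ,
          (a' * N : ℚ) * x ^ 2 + (b' : ℚ) * x * y + (c' : ℚ) * y ^ 2 =
          (a * N : ℚ) * (((g : Matrix (Fin 2) (Fin 2) ℤ) 0 0 : ℚ) * x +
              ((g : Matrix (Fin 2) (Fin 2) ℤ) 0 1 : ℚ) * y) ^ 2 +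
            (b : ℚ) * (((g : Matrix (Fin 2) (Fin 2) ℤ) 0 0 : ℚ) * x +
              ((g : Matrix (Fin 2) (Fin 2) ℤ) 0 1 : ℚ) * y) *
              (((g : Matrix (Fin 2) (Fin 2) ℤ) 1 0 : ℚ) * x +
              ((g : Matrix (Fin 2) (Fin 2) ℤ) 1 1 : ℚ) * y) +
            (c : ℚ) * (((g : Matrix (Fin 2) (Fin 2) ℤ) 1 0 : ℚ) * x +
              ((g : Matrix (Fin 2) (Fin 2) ℤ) 1 1 : ℚ) * y) ^ 2) := by
  have hNQ : (N:ℚ) ≠ 0 := Nat.cast_ne_zero.2 hN.ne'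
  have hNZ : (N:ℤ) ≠ 0 := Int.natCast_ne_zero.2 hN.ne'
  have h4N : (4:ℚ) * (N:ℚ) ≠ 0 := mul_ne_zero four_ne_zero hNQ
  constructor
  · -- Part 1: the bijection
    refine ⟨⟨fun X => ⟨qmap N X.1, ?_⟩, fun q => ⟨fm N (q.1.1 / N) q.1.2.1 q.1.2.2, ?_⟩,
        ?_, ?_⟩, ?_⟩
    · obtain ⟨⟨a, b, c, hX, hb⟩, hdet⟩ := X.2
      rw [hX, qmap_fm N hNQ]
      refine ⟨⟨a, mul_comm a N ▸ rfl⟩, hb, ?_⟩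
      rw [hX, det_fm N hNQ] at hdet
      rw [div_eq_iff h4N] at hdet
      rw [hdet]; ring
    · obtain ⟨⟨a, hq1⟩, hb, hdisc⟩ := q.2
      have ha : q.1.1 / (N:ℤ) = a := by rw [hq1]; exact Int.mul_ediv_cancel_left a hNZ
      refine ⟨⟨q.1.1 / N, q.1.2.1, q.1.2.2, rfl, hb⟩, ?_⟩
      rw [det_fm N hNQ, div_eq_iff h4N, ha]
      push_cast [hq1] at hdisc ⊢
      linear_combination hdisc
    · rintro ⟨X, ⟨a, b, c, hX, hb⟩, hdet⟩
      apply Subtype.ext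
      show fm N ((qmap N X).1 / N) (qmap N X).2.1 (qmap N X).2.2 = X
      rw [hX, qmap_fm N hNQ]
      simp [Int.mul_ediv_cancel a hNZ]
    · rintro ⟨⟨A, B, C⟩, ⟨a, hq1⟩, hb, hdisc⟩
      apply Subtype.ext
      show qmap N (fm N (A / N) B C) = (A, B, C)
      rw [qmap_fm N hNQ, show A = (N:ℤ) * a from hq1, Int.mul_ediv_cancel_left a hNZ,
        mul_comm a (N:ℤ)]
    · rintro ⟨X, hX⟩ a b c h
      show qmap N X = (a * N, b, c)
      rw [show X = fm N a b c from h, qmap_fm N hNQ]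
  · -- Part 2: equivariance
    intro g hg a b c a' b' c' h x y
    have hdet : ((g : Matrix (Fin 2) (Fin 2) ℤ) 0 0 : ℚ) *
        ((g : Matrix (Fin 2) (Fin 2) ℤ) 1 1 : ℚ)
        - ((g : Matrix (Fin 2) (Fin 2) ℤ) 0 1 : ℚ) *
        ((g : Matrix (Fin 2) (Fin 2) ℤ) 1 0 : ℚ) = 1 := by
      have h0 := g.prop
      rw [Matrix.det_fin_two] at h0
      exact_mod_cast congrArg (Int.cast : ℤ → ℚ) h0
    have hdetG : (((g : Matrix (Fin 2) (Fin 2) ℤ)).map (Int.cast : ℤ → ℚ)).det = 1 := by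
      rw [Matrix.det_fin_two]
      simpa only [Matrix.map_apply] using hdet
    set G : Matrix (Fin 2) (Fin 2) ℚ := (g : Matrix (Fin 2) (Fin 2) ℤ).map (Int.cast : ℤ → ℚ)
      with hG
    set A : ℚ := ((g : Matrix (Fin 2) (Fin 2) ℤ) 0 0 : ℚ) with hA
    set B : ℚ := ((g : Matrix (Fin 2) (Fin 2) ℤ) 0 1 : ℚ) with hB
    set C : ℚ := ((g : Matrix (Fin 2) (Fin 2) ℤ) 1 0 : ℚ) with hC
    set D : ℚ := ((g : Matrix (Fin 2) (Fin 2) ℤ) 1 1 : ℚ) with hD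
    have h2 : G * fm N a' b' c' = fm N a b c * G := by
      rw [h, ← mul_assoc, ← mul_assoc,
        Matrix.mul_nonsing_inv G (by rw [hdetG]; exact isUnit_one), one_mul]
    have hGA : G 0 0 = A := by rw [hG, Matrix.map_apply]
    have hGB : G 0 1 = B := by rw [hG, Matrix.map_apply]
    have hGC : G 1 0 = C := by rw [hG, Matrix.map_apply]
    have hGD : G 1 1 = D := by rw [hG, Matrix.map_apply]
    have hc : (2*(N:ℚ)^2) ≠ 0 := by positivity
    have h00 := congrFun (congrFun h2 0) 0
    have h01 := congrFun (congrFun h2 0) 1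
    have h10 := congrFun (congrFun h2 1) 0
    have h11 := congrFun (congrFun h2 1) 1
    simp only [Matrix.mul_apply, Fin.sum_univ_two, fm, Matrix.of_apply, hGA, hGB, hGC, hGD,
      Matrix.cons_val', Matrix.cons_val_zero, Matrix.cons_val_one, Matrix.head_cons,
      Matrix.empty_val', Matrix.cons_val_fin_one, Matrix.head_fin_const] at h00 h01 h10 h11
    field_simp at h00 h01 h10 h11
    have e1 : A * b' - 2*N*B*a' = b*A + 2*c*C := by
      apply mul_right_cancel₀ hc
      linear_combination (2*(N:ℚ)^2) * h00
    have hc3 : (2*(N:ℚ)^3) ≠ 0 := by positivity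
    have e2 : 2*A*c' - B*b' = b*B + 2*c*D := by
      apply mul_right_cancel₀ hc3
      linear_combination (2*(N:ℚ)^3) * h01
    have e3 : C*b' - 2*N*D*a' = -2*N*a*A - b*C := by
      linear_combination h10
    have e4 : 2*C*c' - D*b' = -2*N*a*B - b*D := by
      apply mul_right_cancel₀ hc
      linear_combination (2*(N:ℚ)^2) * h11
    linear_combination ((C/2)*x^2 + D*x*y)*e1 + (-(A/2)*x^2 - B*x*y)*e3 + (D/2)*y^2*e2
      + (-(B/2))*y^2*e4 + (-(N:ℚ)*a'*x^2 - b'*x*y - c'*y^2)*hdet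
end

section
/- Let X be a trace-zero real 2×2 matrix with Q(X) = -N det(X) = m < 0, and z a point in the upper half-plane not equal to the point z_X associated to X. Then Q(X_z) = |m| · sinh²(d(z, z_X)), where X_z is the projection of X onto the positive definite plane X(z)^⊥, d denotes hyperbolic distance on the upper half-plane, and z_X is the Heegner point of the binary quadratic form corresponding to X. -/
/-!
If `tr A = 0` then `det (A - t•B) = det A + t·tr(AB) + t²·det B`. With `(A, B) = N·tr(AB)`
we have `Q(X(z)) = -1` and `(X(z), X(z)) = -2`, so removing the `X(z)`-component of `X` gives
`Q(X_z) = Q(X) + (X, X(z))² / 4`. Since the Heegner point `w` is a non-real root of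
`aNx² + bx + c`, Vieta gives `b = -2aN·Re w` and `c = aN·|w|²`, whence `Q(X) = -a²N(Im w)²` and
`(X, X(z)) = -(aN|z|² + b·Re z + c) / (√N·Im z) = -2a√N·Im w·cosh d(z, w)`.
Thus `Q(X_z) = a²N(Im w)²(cosh² d - 1) = |m|·sinh² d`.
-/

open Matrix

/-- The matrix `X(z) = (1/(√N·y))·(-x, |z|²; -1, x)` for `z = x + iy`. -/
noncomputable def Xmat (N : ℕ) (z : ℂ) : Matrix (Fin 2) (Fin 2) ℝ :=
  (1 / (Real.sqrt N * z.im)) • !![-z.re, Complex.normSq z; -1, z.re]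

/-- Orthogonal projection of `X` onto the line `ℝ·X(z)`, with respect to the
bilinear form `(A,B) = N·tr(AB)`. -/
noncomputable def projNeg (N : ℕ) (z : ℂ) (X : Matrix (Fin 2) (Fin 2) ℝ) :
    Matrix (Fin 2) (Fin 2) ℝ :=
  (((N : ℝ) * (X * Xmat N z).trace) / ((N : ℝ) * (Xmat N z * Xmat N z).trace)) • Xmat N z

theorem quadratic_coeffs_of_root_of_im_ne_zero {A B C : ℝ} {w : ℂ} (hw : w.im ≠ 0)
    (h : (A : ℂ) * w ^ 2 + B * w + C = 0) :
    B = -2 * A * w.re ∧ C = A * Complex.normSq w := by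
  have hre := congrArg Complex.re h
  have him := congrArg Complex.im h
  simp only [Complex.add_re, Complex.add_im, Complex.mul_re, Complex.mul_im, pow_two,
    Complex.ofReal_re, Complex.ofReal_im, Complex.zero_re, Complex.zero_im] at hre him
  have hB : B = -2 * A * w.re :=
    mul_left_cancel₀ hw (by linear_combination him)
  refine ⟨hB, ?_⟩
  rw [Complex.normSq_apply]
  subst hB
  linear_combination hre

theorem Matrix.det_sub_smul_of_trace_eq_zero {R : Type*} [CommRing R]
    {A : Matrix (Fin 2) (Fin 2) R} (hA : A.trace = 0) (B : Matrix (Fin 2) (Fin 2) R) (t : R) :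
    (A - t • B).det = A.det + t * (A * B).trace + t ^ 2 * B.det := by
  rw [trace_fin_two] at hA
  simp only [det_fin_two, trace_fin_two, mul_apply, Fin.sum_univ_two, sub_apply, smul_apply,
    smul_eq_mul]
  linear_combination (-t * (B 0 0 + B 1 1)) * hA

section Xmat

variable {N : ℕ} {z : ℂ}

theorem trace_Xmat : (Xmat N z).trace = 0 := by
  simp [Xmat, trace_fin_two]

theorem mul_det_Xmat (hN : N ≠ 0) (hz : z.im ≠ 0) : (N : ℝ) * (Xmat N z).det = 1 := by
  have hsq : Real.sqrt N ^ 2 = N := Real.sq_sqrt N.cast_nonneg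
  have hs : Real.sqrt N ≠ 0 := by positivity
  simp only [Xmat, det_smul, Fintype.card_fin, det_fin_two_of, Complex.normSq_apply]
  field_simp
  rw [hsq]
  ring

theorem mul_trace_Xmat_mul_self (hN : N ≠ 0) (hz : z.im ≠ 0) :
    (N : ℝ) * (Xmat N z * Xmat N z).trace = -2 := by
  have h := det_sub_smul_of_trace_eq_zero (trace_Xmat (N := N) (z := z)) (Xmat N z) 1
  rw [one_smul, sub_self, det_zero, one_mul, one_pow, one_mul] at h
  linear_combination -(N : ℝ) * h - 2 * mul_det_Xmat hN hz

theorem neg_mul_det_sub_projNeg (hN : N ≠ 0) (hz : z.im ≠ 0)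
    {X : Matrix (Fin 2) (Fin 2) ℝ} (hX : X.trace = 0) :
    -(N : ℝ) * (X - projNeg N z X).det =
      -(N : ℝ) * X.det + ((N : ℝ) * (X * Xmat N z).trace) ^ 2 / 4 := by
  rw [projNeg, mul_trace_Xmat_mul_self hN hz, det_sub_smul_of_trace_eq_zero hX]
  linear_combination (-((N : ℝ) * (X * Xmat N z).trace) ^ 2 / 4) * mul_det_Xmat hN hz

end Xmat

/-- The matrix attached to the binary quadratic form `aNx² + bxy + cy²`. -/
noncomputable def formMatrix (N : ℕ) (a b c : ℝ) : Matrix (Fin 2) (Fin 2) ℝ :=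
  !![b / (2 * N), c / N; -a, -b / (2 * N)]

section formMatrix

variable {N : ℕ} (a b c : ℝ)

theorem trace_formMatrix : (formMatrix N a b c).trace = 0 := by
  simp [formMatrix, trace_fin_two, neg_div]

theorem neg_mul_det_formMatrix (hN : N ≠ 0) :
    -(N : ℝ) * (formMatrix N a b c).det = b ^ 2 / (4 * N) - a * c := by
  have hN' : (N : ℝ) ≠ 0 := Nat.cast_ne_zero.mpr hN
  simp only [formMatrix, det_fin_two_of]
  field_simp
  ring

theorem mul_trace_formMatrix_mul_Xmat (hN : N ≠ 0) {z : ℂ} (hz : z.im ≠ 0) :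
    (N : ℝ) * (formMatrix N a b c * Xmat N z).trace =
      -(a * N * Complex.normSq z + b * z.re + c) / (Real.sqrt N * z.im) := by
  have hs : Real.sqrt N ≠ 0 := by positivity
  simp only [formMatrix, Xmat, trace_fin_two, mul_apply, Fin.sum_univ_two, Matrix.smul_apply,
    of_apply, cons_val', cons_val_zero, cons_val_one, empty_val', cons_val_fin_one,
    smul_eq_mul]
  field_simp
  ring

end formMatrix

theorem form_eval_eq_of_root {A B C : ℝ} {w : ℂ} (hB : B = -2 * A * w.re)
    (hC : C = A * Complex.normSq w) (z : ℂ) :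
    A * Complex.normSq z + B * z.re + C = A * (‖z - w‖ ^ 2 + 2 * z.im * w.im) := by
  rw [hB, hC, Complex.sq_norm, Complex.normSq_apply, Complex.normSq_apply, Complex.normSq_apply,
    Complex.sub_re, Complex.sub_im]
  ring

section root

variable {N : ℕ} {a b c : ℝ} {w : ℂ}

theorem neg_mul_det_formMatrix_of_root (hN : N ≠ 0) (hb : b = -2 * (a * N) * w.re)
    (hc : c = a * N * Complex.normSq w) :
    -(N : ℝ) * (formMatrix N a b c).det = -(a ^ 2 * N * w.im ^ 2) := by
  have hN' : (N : ℝ) ≠ 0 := Nat.cast_ne_zero.mpr hN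
  rw [neg_mul_det_formMatrix _ _ _ hN, hb, hc, Complex.normSq_apply]
  field_simp
  ring

theorem mul_trace_formMatrix_mul_Xmat_of_root (hN : N ≠ 0) (hb : b = -2 * (a * N) * w.re)
    (hc : c = a * N * Complex.normSq w) (hw : w.im ≠ 0) {z : ℂ} (hz : z.im ≠ 0) :
    (N : ℝ) * (formMatrix N a b c * Xmat N z).trace =
      -2 * a * Real.sqrt N * w.im * (1 + ‖z - w‖ ^ 2 / (2 * z.im * w.im)) := by
  have hsq : Real.sqrt N ^ 2 = N := Real.sq_sqrt N.cast_nonneg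
  have hs : Real.sqrt N ≠ 0 := by positivity
  rw [mul_trace_formMatrix_mul_Xmat _ _ _ hN hz, form_eval_eq_of_root hb hc]
  field_simp
  rw [hsq]
  ring

end root

theorem stmt_17_general (N : ℕ) (hN : 0 < N) (a b c : ℝ) (m : ℝ)
    (X : Matrix (Fin 2) (Fin 2) ℝ)
    (hX : X = !![b / (2 * N), c / N; -a, -b / (2 * N)])
    (hm : m = -(N : ℝ) * X.det) (hmneg : m < 0)
    (w : ℂ) (hw : 0 < w.im)
    (hroot : (a * N : ℂ) * w ^ 2 + (b : ℂ) * w + (c : ℂ) = 0)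
    (z : ℂ) (hz : 0 < z.im)
    (d : ℝ)
    (hcosh : Real.cosh d = 1 + ‖z - w‖ ^ 2 / (2 * z.im * w.im)) :
    -(N : ℝ) * (X - projNeg N z X).det = |m| * Real.sinh d ^ 2 := by
  change X = formMatrix N a b c at hX
  obtain ⟨hb, hc⟩ := quadratic_coeffs_of_root_of_im_ne_zero (A := a * N) hw.ne'
    (by push_cast; exact hroot)
  have hQX : m = -(a ^ 2 * N * w.im ^ 2) := by
    rw [hm, hX, neg_mul_det_formMatrix_of_root hN.ne' hb hc]
  have hpair : (N : ℝ) * (X * Xmat N z).trace = -2 * a * Real.sqrt N * w.im * Real.cosh d := by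
    rw [hX, mul_trace_formMatrix_mul_Xmat_of_root hN.ne' hb hc hw.ne' hz.ne', hcosh]
  rw [neg_mul_det_sub_projNeg hN.ne' hz.ne' (hX ▸ trace_formMatrix a b c), ← hm, hpair,
    abs_of_neg hmneg, hQX, Real.sinh_sq]
  linear_combination (a ^ 2 * w.im ^ 2 * Real.cosh d ^ 2) *
    Real.sq_sqrt (N.cast_nonneg : (0 : ℝ) ≤ N)

/-- For `X = (b/2N, c/N; -a, -b/2N)` with `Q(X) = m < 0`, Heegner point `z_X`
(the root of `aN x² + bx + c` in the upper half-plane) and any `z ≠ z_X` in the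
upper half-plane: `Q(X_z) = |m|·sinh²(d(z, z_X))`, where `d` is the hyperbolic
distance, characterized by `cosh d(z,w) = 1 + |z-w|²/(2 Im z Im w)`. -/
theorem stmt_17 (N : ℕ) (hN : 0 < N) (a b c : ℝ) (m : ℝ)
    (X : Matrix (Fin 2) (Fin 2) ℝ)
    (hX : X = !![b / (2 * N), c / N; -a, -b / (2 * N)])
    (hm : m = -(N : ℝ) * X.det) (hmneg : m < 0)
    (w : ℂ) (hw : 0 < w.im)
    (hroot : (a * N : ℂ) * w ^ 2 + (b : ℂ) * w + (c : ℂ) = 0)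
    (z : ℂ) (hz : 0 < z.im) (hzw : z ≠ w)
    (d : ℝ) (hd : 0 ≤ d)
    (hcosh : Real.cosh d = 1 + ‖z - w‖ ^ 2 / (2 * z.im * w.im)) :
    -(N : ℝ) * (X - projNeg N z X).det = |m| * Real.sinh d ^ 2 :=
  stmt_17_general N hN a b c m X hX hm hmneg w hw hroot z hz d hcosh
end
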